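/- arXiv:2210.12277 — 5 statements merged into one kernel-verified Lean document; each statement's English description precedes it below -/
import Mathlib

section
/- Let g : ℝ^p → ℝ be convex and differentiable, let ρ > 0, and let x, y ∈ ℝ^p satisfy the implicit (proximal) update equation y = x − (1/ρ)∇g(y). Then ‖∇g(y)‖ ≤ ‖∇g(x)‖. -/
/-!
Convexity makes the gradient monotone, `⟪∇g y, x - y⟫ ≤ ⟪∇g x, x - y⟫`, as one sees by adding the
first-order conditions at `x` and at `y`, each obtained by restricting `g` to the segment `[x, y]`.
The update gives `x - y = ρ⁻¹ ∇g y`, so monotonicity reads `‖∇g y‖² ≤ ⟪∇g x, ∇g y⟫`, and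
Cauchy–Schwarz finishes.
-/

open AffineMap
open scoped Gradient RealInnerProductSpace

section FirstOrder

variable {E : Type*} [NormedAddCommGroup E] [NormedSpace ℝ E] {f : E → ℝ} {s : Set E} {a b : E}

theorem ConvexOn.add_fderiv_apply_sub_le (hf : ConvexOn ℝ s f) (ha : a ∈ s) (hb : b ∈ s)
    (hfa : DifferentiableAt ℝ f a) : f a + fderiv ℝ f a (b - a) ≤ f b := by
  let ℓ : ℝ →ᵃ[ℝ] E := lineMap a b
  have hderiv : HasDerivAt (f ∘ ℓ) (fderiv ℝ f a (b - a)) 0 :=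
    hfa.hasFDerivAt.comp_hasDerivAt_of_eq 0 hasDerivAt_lineMap (lineMap_apply_zero a b).symm
  have hslope : fderiv ℝ f a (b - a) ≤ slope (f ∘ ℓ) 0 1 :=
    (hf.comp_affineMap ℓ).le_slope_of_hasDerivAt (by simpa [ℓ]) (by simpa [ℓ]) one_pos hderiv
  have hsecant : slope (f ∘ ℓ) 0 1 = f b - f a := by simp [ℓ, slope_def_field]
  linarith

theorem ConvexOn.fderiv_apply_sub_le_fderiv_apply_sub (hf : ConvexOn ℝ s f) (ha : a ∈ s)
    (hb : b ∈ s) (hfa : DifferentiableAt ℝ f a) (hfb : DifferentiableAt ℝ f b) :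
    fderiv ℝ f a (b - a) ≤ fderiv ℝ f b (b - a) := by
  have hab := hf.add_fderiv_apply_sub_le ha hb hfa
  have hba := hf.add_fderiv_apply_sub_le hb ha hfb
  rw [← neg_sub, map_neg] at hba
  linarith

end FirstOrder

section Gradient

variable {F : Type*} [NormedAddCommGroup F] [InnerProductSpace ℝ F]

theorem norm_le_of_norm_sq_le_inner {u v : F} (h : ‖u‖ ^ 2 ≤ ⟪v, u⟫) : ‖u‖ ≤ ‖v‖ := by
  rcases (norm_nonneg u).eq_or_lt with hu | hu
  · rw [← hu]; exact norm_nonneg v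
  · refine le_of_mul_le_mul_right ?_ hu
    calc ‖u‖ * ‖u‖ = ‖u‖ ^ 2 := (sq _).symm
      _ ≤ ⟪v, u⟫ := h
      _ ≤ ‖v‖ * ‖u‖ := real_inner_le_norm v u

theorem ConvexOn.inner_gradient_sub_le_inner_gradient_sub [CompleteSpace F] {g : F → ℝ}
    {t : Set F} {x y : F}
    (hg : ConvexOn ℝ t g) (hx : x ∈ t) (hy : y ∈ t)
    (hgx : DifferentiableAt ℝ g x) (hgy : DifferentiableAt ℝ g y) :
    ⟪∇ g x, y - x⟫ ≤ ⟪∇ g y, y - x⟫ := by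
  simpa only [inner_gradient_left] using hg.fderiv_apply_sub_le_fderiv_apply_sub hx hy hgx hgy

end Gradient

/-- Gradient norm contraction for the implicit (proximal) update:
if y = x − (1/ρ)∇g(y) with g convex and differentiable, then
‖∇g(y)‖ ≤ ‖∇g(x)‖. -/
theorem stmt_1 {p : ℕ} (g : EuclideanSpace ℝ (Fin p) → ℝ)
    (hgconv : ConvexOn ℝ Set.univ g) (hgdiff : Differentiable ℝ g)
    (ρ : ℝ) (hρ : 0 < ρ) (x y : EuclideanSpace ℝ (Fin p))
    (hupd : y = x - (1 / ρ) • gradient g y) :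
    ‖gradient g y‖ ≤ ‖gradient g x‖ := by
  have hstep : x - y = (1 / ρ) • ∇ g y := sub_eq_of_eq_add' (eq_sub_iff_add_eq.mp hupd).symm
  have hmono :=
    hgconv.inner_gradient_sub_le_inner_gradient_sub trivial trivial (hgdiff y) (hgdiff x)
  rw [hstep, inner_smul_right, inner_smul_right, real_inner_self_eq_norm_sq] at hmono
  exact norm_le_of_norm_sq_le_inner (le_of_mul_le_mul_left hmono (one_div_pos.mpr hρ))
end

section
/- Let g : ℝ^p → ℝ be convex and differentiable, let ρ > 0, and let x, y ∈ ℝ^p satisfy the implicit (proximal) update equation y = x − (1/ρ)∇g(y). Then for every z ∈ ℝ^p, ‖y − z‖² ≤ ‖x − z‖² − (2/ρ)(g(y) − g(z)) − ‖y − x‖². -/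
open scoped RealInnerProductSpace

/-- Restricted to the segment `[a, b]`, `f` is a convex function of one variable, whose slopes
from `0` dominate its derivative at `0`. -/
theorem ConvexOn.add_fderiv_sub_le {E : Type*} [NormedAddCommGroup E] [NormedSpace ℝ E]
    {S : Set E} {f : E → ℝ} {f' : E →L[ℝ] ℝ} {a b : E}
    (hf : ConvexOn ℝ S f) (ha : a ∈ S) (hb : b ∈ S) (hf' : HasFDerivAt f f' a) :
    f a + f' (b - a) ≤ f b := by
  set l : ℝ →ᵃ[ℝ] E := AffineMap.lineMap a b
  have hl0 : l 0 = a := AffineMap.lineMap_apply_zero a b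
  have hl1 : l 1 = b := AffineMap.lineMap_apply_one a b
  have hline : ConvexOn ℝ (l ⁻¹' S) (f ∘ l) := hf.comp_affineMap l
  have hderiv : HasDerivAt (f ∘ l) (f' (b - a)) 0 := by
    refine HasFDerivAt.comp_hasDerivAt (0 : ℝ) ?_ AffineMap.hasDerivAt_lineMap
    rwa [hl0]
  have hslope := hline.le_slope_of_hasDerivAt (hl0 ▸ ha : l 0 ∈ S) (hl1 ▸ hb : l 1 ∈ S)
    zero_lt_one hderiv
  simp only [slope_def_field, Function.comp_apply, hl0, hl1, sub_zero, div_one] at hslope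
  linarith

theorem ConvexOn.add_inner_gradient_sub_le {E : Type*} [NormedAddCommGroup E]
    [InnerProductSpace ℝ E] [CompleteSpace E] {S : Set E} {f : E → ℝ} {f' a b : E}
    (hf : ConvexOn ℝ S f) (ha : a ∈ S) (hb : b ∈ S) (hf' : HasGradientAt f f' a) :
    f a + ⟪f', b - a⟫ ≤ f b := by
  simpa using hf.add_fderiv_sub_le ha hb hf'.hasFDerivAt

/-- Expand `‖x - z‖² = ‖(x - y) + (y - z)‖²` and bound the cross term
`2⟪x - y, y - z⟫ = 2ρ⁻¹⟪∇g(y), y - z⟫` from below by the gradient inequality at `y`. -/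
theorem ConvexOn.norm_sub_sq_le_of_eq_sub_smul_gradient {E : Type*} [NormedAddCommGroup E]
    [InnerProductSpace ℝ E] [CompleteSpace E] {S : Set E} {g : E → ℝ} {ρ : ℝ} {v x y z : E}
    (hg : ConvexOn ℝ S g) (hy : y ∈ S) (hz : z ∈ S) (hv : HasGradientAt g v y) (hρ : 0 ≤ ρ)
    (hupd : y = x - ρ⁻¹ • v) :
    ‖y - z‖ ^ 2 ≤ ‖x - z‖ ^ 2 - (2 / ρ) * (g y - g z) - ‖y - x‖ ^ 2 := by
  have hxy : x - y = ρ⁻¹ • v := by rw [hupd, sub_sub_cancel]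
  have hexpand : ‖x - z‖ ^ 2 = ‖x - y‖ ^ 2 + 2 * ⟪x - y, y - z⟫ + ‖y - z‖ ^ 2 := by
    rw [← norm_add_sq_real, sub_add_sub_cancel]
  have hcross : (2 / ρ) * (g y - g z) ≤ 2 * ⟪x - y, y - z⟫ := by
    have hgrad : g y - g z ≤ ⟪v, y - z⟫ := by
      have := hg.add_inner_gradient_sub_le hy hz hv
      rw [← neg_sub y z, inner_neg_right] at this
      linarith
    rw [hxy, real_inner_smul_left, ← mul_assoc, div_eq_mul_inv]
    exact mul_le_mul_of_nonneg_left hgrad (by positivity)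
  rw [norm_sub_rev x y] at hexpand
  linarith

/-- Descent inequality for the implicit (proximal) update:
if y = x − (1/ρ)∇g(y) with g convex and differentiable, then for every z,
‖y − z‖² ≤ ‖x − z‖² − (2/ρ)(g(y) − g(z)) − ‖y − x‖². -/
theorem stmt_2 {p : ℕ} (g : EuclideanSpace ℝ (Fin p) → ℝ)
    (hgconv : ConvexOn ℝ Set.univ g) (hgdiff : Differentiable ℝ g)
    (ρ : ℝ) (hρ : 0 < ρ) (x y : EuclideanSpace ℝ (Fin p))
    (hupd : y = x - (1 / ρ) • gradient g y) :
    ∀ z : EuclideanSpace ℝ (Fin p),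
      ‖y - z‖ ^ 2 ≤ ‖x - z‖ ^ 2 - (2 / ρ) * (g y - g z) - ‖y - x‖ ^ 2 := fun z =>
  hgconv.norm_sub_sq_le_of_eq_sub_smul_gradient (Set.mem_univ y) (Set.mem_univ z)
    (hgdiff y).hasGradientAt hρ.le (by rwa [← one_div])
end

section
/- Let C ⊆ ℝ^p be a nonempty closed convex set with nearest-point projection P_C, let θ* ∈ C, let g : ℝ^p → ℝ be convex and differentiable, let ρ > 0, and let w, θ⁺ ∈ ℝ^p with w = P_C(w') for some w' ∈ ℝ^p, satisfying the implicit update θ⁺ = w − (1/ρ)∇g(θ⁺). Then ‖P_C(θ⁺) − θ*‖² ≤ ‖w − θ*‖² − (2/ρ)(g(w) − g(θ*)) + (2/ρ²)‖∇g(w)‖². -/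
/-!
Projection onto `C` does not increase the distance to `θ*`, so it suffices to bound
`‖θ⁺ - θ*‖²`. With `r = 1/ρ`, expand `‖w - θ*‖²` around `θ⁺ = w - r ∇g(θ⁺)` and apply the
gradient inequality of the convex `g` at `θ⁺` (towards `θ*`) and at `w` (towards `θ⁺`). What
remains is `r² (2⟪∇g(w), ∇g(θ⁺)⟫ - ‖∇g(θ⁺)‖²) ≤ r² ‖∇g(w)‖²`.
-/

open Set RealInnerProductSpace

theorem ConvexOn.fderiv_sub_le {E : Type*} [NormedAddCommGroup E] [NormedSpace ℝ E]
    {S : Set E} {g : E → ℝ} {g' : E →L[ℝ] ℝ} {x y : E} (hg : ConvexOn ℝ S g)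
    (hx : x ∈ S) (hy : y ∈ S) (hg' : HasFDerivAt g g' x) :
    g' (y - x) ≤ g y - g x := by
  let φ := g ∘ AffineMap.lineMap (k := ℝ) x y
  have hφ : ConvexOn ℝ (AffineMap.lineMap x y ⁻¹' S) φ := hg.comp_affineMap _
  have hφ' : HasDerivAt φ (g' (y - x)) 0 := by
    apply HasFDerivAt.comp_hasDerivAt
    · simpa using hg'
    · exact AffineMap.hasDerivAt_lineMap
  have hslope := hφ.le_slope_of_hasDerivAt (by simpa using hx) (by simpa using hy) one_pos hφ'
  simpa [φ, slope_def_field] using hslope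

theorem ConvexOn.inner_gradient_sub_le {F : Type*} [NormedAddCommGroup F] [InnerProductSpace ℝ F]
    [CompleteSpace F] {S : Set F} {g : F → ℝ} {x y : F} (hg : ConvexOn ℝ S g)
    (hx : x ∈ S) (hy : y ∈ S) (hgx : DifferentiableAt ℝ g x) :
    ⟪gradient g x, y - x⟫ ≤ g y - g x := by
  simpa using hg.fderiv_sub_le hx hy hgx.hasGradientAt.hasFDerivAt

theorem Convex.norm_sub_le_of_isNearest {F : Type*} [NormedAddCommGroup F] [InnerProductSpace ℝ F]
    {K : Set F} (hK : Convex ℝ K) {u v y : F} (hv : v ∈ K) (hmin : ∀ z ∈ K, ‖u - v‖ ≤ ‖u - z‖)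
    (hy : y ∈ K) : ‖v - y‖ ≤ ‖u - y‖ := by
  have : Nonempty K := ⟨⟨v, hv⟩⟩
  have hinf : ‖u - v‖ = ⨅ z : K, ‖u - z‖ :=
    le_antisymm (le_ciInf fun z => hmin z z.2)
      (ciInf_le ⟨0, by rintro r ⟨z, rfl⟩; positivity⟩ (⟨v, hv⟩ : K))
  have hvar : ⟪u - v, y - v⟫ ≤ 0 := (norm_eq_iInf_iff_real_inner_le_zero hK hv).mp hinf y hy
  have hexp : ‖u - y‖ ^ 2 = ‖u - v‖ ^ 2 - 2 * ⟪u - v, y - v⟫ + ‖y - v‖ ^ 2 := by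
    rw [← norm_sub_sq_real, sub_sub_sub_cancel_right]
  rw [norm_sub_rev v y]
  refine (sq_le_sq₀ (norm_nonneg _) (norm_nonneg _)).mp ?_
  nlinarith [sq_nonneg ‖u - v‖]

theorem ConvexOn.norm_implicit_gradient_step_sub_sq_le {F : Type*} [NormedAddCommGroup F]
    [InnerProductSpace ℝ F] [CompleteSpace F] {g : F → ℝ} (hg : ConvexOn ℝ univ g)
    {r : ℝ} (hr : 0 ≤ r) {w y : F} (hgw : DifferentiableAt ℝ g w) (hgy : DifferentiableAt ℝ g y)
    (hy : y = w - r • gradient g y) (z : F) :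
    ‖y - z‖ ^ 2 ≤ ‖w - z‖ ^ 2 - 2 * r * (g w - g z) + r ^ 2 * ‖gradient g w‖ ^ 2 := by
  set G := gradient g y
  set v := gradient g w
  have hexp : ‖w - z‖ ^ 2 = ‖y - z‖ ^ 2 + 2 * r * ⟪G, y - z⟫ + r ^ 2 * ‖G‖ ^ 2 := by
    have : w - z = (y - z) + r • G := by rw [hy]; abel
    rw [this, norm_add_sq_real, real_inner_smul_right, real_inner_comm, norm_smul,
      Real.norm_of_nonneg hr]
    ring
  have hconv_y : ⟪G, z - y⟫ ≤ g z - g y := hg.inner_gradient_sub_le trivial trivial hgy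
  have hconv_w : ⟪v, y - w⟫ ≤ g y - g w := hg.inner_gradient_sub_le trivial trivial hgw
  have hstep : y - w = -(r • G) := by rw [hy]; abel
  rw [hstep, inner_neg_right, real_inner_smul_right] at hconv_w
  have hzy : ⟪G, z - y⟫ = -⟪G, y - z⟫ := by rw [← inner_neg_right, neg_sub]
  have hsq : 0 ≤ ‖v‖ ^ 2 - 2 * ⟪v, G⟫ + ‖G‖ ^ 2 := norm_sub_sq_real v G ▸ sq_nonneg _
  nlinarith [mul_le_mul_of_nonneg_left hconv_y (by positivity : 0 ≤ 2 * r),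
    mul_le_mul_of_nonneg_left hconv_w (by positivity : 0 ≤ 2 * r),
    mul_nonneg (sq_nonneg r) hsq]

theorem stmt_5_general {p : ℕ} (C : Set (EuclideanSpace ℝ (Fin p)))
    (hCconv : Convex ℝ C)
    (P : EuclideanSpace ℝ (Fin p) → EuclideanSpace ℝ (Fin p))
    (hP : ∀ x, P x ∈ C ∧ ∀ y ∈ C, ‖x - P x‖ ≤ ‖x - y‖)
    (θstar : EuclideanSpace ℝ (Fin p)) (hθstar : θstar ∈ C)
    (g : EuclideanSpace ℝ (Fin p) → ℝ)
    (hgconv : ConvexOn ℝ Set.univ g) (hgdiff : Differentiable ℝ g)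
    (ρ : ℝ) (hρ : 0 < ρ)
    (w θplus : EuclideanSpace ℝ (Fin p))
    (hupd : θplus = w - (1 / ρ) • gradient g θplus) :
    ‖P θplus - θstar‖ ^ 2 ≤
      ‖w - θstar‖ ^ 2 - (2 / ρ) * (g w - g θstar) +
        (2 / ρ ^ 2) * ‖gradient g w‖ ^ 2 := by
  have hproj : ‖P θplus - θstar‖ ≤ ‖θplus - θstar‖ :=
    hCconv.norm_sub_le_of_isNearest (hP θplus).1 (hP θplus).2 hθstar
  have hstep := hgconv.norm_implicit_gradient_step_sub_sq_le (by positivity) (hgdiff w)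
    (hgdiff θplus) hupd θstar
  calc ‖P θplus - θstar‖ ^ 2 ≤ ‖θplus - θstar‖ ^ 2 := by gcongr
    _ ≤ ‖w - θstar‖ ^ 2 - 2 * (1 / ρ) * (g w - g θstar) + (1 / ρ) ^ 2 * ‖gradient g w‖ ^ 2 :=
      hstep
    _ ≤ ‖w - θstar‖ ^ 2 - (2 / ρ) * (g w - g θstar) + (2 / ρ ^ 2) * ‖gradient g w‖ ^ 2 := by
      rw [mul_one_div, div_pow, one_pow]
      gcongr
      norm_num

/-- One-step recursion bound for the projected implicit update:
‖P_C(θ⁺) − θ*‖² ≤ ‖w − θ*‖² − (2/ρ)(g(w) − g(θ*)) + (2/ρ²)‖∇g(w)‖². -/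
theorem stmt_5 {p : ℕ} (C : Set (EuclideanSpace ℝ (Fin p)))
    (hCne : C.Nonempty) (hCclosed : IsClosed C) (hCconv : Convex ℝ C)
    (P : EuclideanSpace ℝ (Fin p) → EuclideanSpace ℝ (Fin p))
    (hP : ∀ x, P x ∈ C ∧ ∀ y ∈ C, ‖x - P x‖ ≤ ‖x - y‖)
    (θstar : EuclideanSpace ℝ (Fin p)) (hθstar : θstar ∈ C)
    (g : EuclideanSpace ℝ (Fin p) → ℝ)
    (hgconv : ConvexOn ℝ Set.univ g) (hgdiff : Differentiable ℝ g)
    (ρ : ℝ) (hρ : 0 < ρ)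
    (w w' θplus : EuclideanSpace ℝ (Fin p)) (hw : w = P w')
    (hupd : θplus = w - (1 / ρ) • gradient g θplus) :
    ‖P θplus - θstar‖ ^ 2 ≤
      ‖w - θstar‖ ^ 2 - (2 / ρ) * (g w - g θstar) +
        (2 / ρ ^ 2) * ‖gradient g w‖ ^ 2 :=
  stmt_5_general C hCconv P hP θstar hθstar g hgconv hgdiff ρ hρ w θplus hupd
end

section
/- Under the stochastic proximal distance setup, for every k ≥ 0, E[‖P_C(θ_k) − θ*‖²] ≤ exp(4L²s/ρ₁²)·(4G²s/ρ₁² + ‖P_C(θ₀) − θ*‖²) = r². -/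
/-!
Monotonicity of the gradients of the convex `f i` makes the implicit step `u ↦ x`,
`x + ρ⁻¹ ∇f x = u`, nonexpansive, and the nearest-point map `P` does not increase distances to
points of `C`; hence `‖P θ_k - θ*‖ ≤ ‖(P θ_{k-1} - θ*) - ρ_k⁻¹ ∇f_{ξ_k}(θ*)‖`. The iterate
`θ_{k-1}` is a function of `ξ_0, …, ξ_{k-1}`, so `ξ_k` is uniform and independent of it, and
averaging over `ξ_k` replaces the cross term by `⟪∇F(θ*), P θ_{k-1} - θ*⟫ ≥ 0` (first-order
optimality of `θ*` on `C`). This gives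
`E‖P θ_k - θ*‖² ≤ E‖P θ_{k-1} - θ*‖² + G² / ρ_k²`, and summing,
`E‖P θ_k - θ*‖² ≤ ‖P θ₀ - θ*‖² + G² s / ρ₁² ≤ r²`.
-/

open MeasureTheory ProbabilityTheory Filter Real Set
open scoped RealInnerProductSpace

section ConvexAnalysis

variable {H : Type*} [NormedAddCommGroup H] [InnerProductSpace ℝ H]

theorem ConvexOn.add_inner_le_of_hasGradientAt [CompleteSpace H] {f : H → ℝ}
    (hf : ConvexOn ℝ univ f) {x g : H} (hg : HasGradientAt f g x) (y : H) : f x + ⟪g, y - x⟫ ≤ f y := by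
  set ℓ : ℝ →ᵃ[ℝ] H := AffineMap.lineMap x y
  have hline : ConvexOn ℝ univ (f ∘ ℓ) := by simpa using hf.comp_affineMap ℓ
  have hderiv : HasDerivAt (f ∘ ℓ) ⟪g, y - x⟫ 0 := by
    have := (hasGradientAt_iff_hasFDerivAt.1 (by simpa using hg)).comp_hasDerivAt (0 : ℝ)
      (AffineMap.hasDerivAt_lineMap (a := x) (b := y) (x := 0))
    simpa using this
  have := hline.le_slope_of_hasDerivAt (mem_univ 0) (mem_univ 1) one_pos hderiv
  simp [ℓ, slope_def_field] at this
  linarith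

theorem ConvexOn.inner_gradient_sub_nonneg [CompleteSpace H] {f : H → ℝ}
    (hf : ConvexOn ℝ univ f) (hd : Differentiable ℝ f) (x y : H) : 0 ≤ ⟪gradient f x - gradient f y, x - y⟫ := by
  have hx := hf.add_inner_le_of_hasGradientAt (hd x).hasGradientAt y
  have hy := hf.add_inner_le_of_hasGradientAt (hd y).hasGradientAt x
  rw [← neg_sub x y, inner_neg_right] at hx
  rw [inner_sub_left]
  linarith

theorem IsMinOn.inner_nonneg_of_hasGradientAt [CompleteSpace H] {F : H → ℝ} {C : Set H}
    (hC : Convex ℝ C) {a g : H} (hmin : IsMinOn F C a) (ha : a ∈ C) (hg : HasGradientAt F g a) {y : H}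
    (hy : y ∈ C) : 0 ≤ ⟪g, y - a⟫ := by
  simpa using hmin.localize.hasFDerivWithinAt_nonneg
    (hasGradientAt_iff_hasFDerivAt.1 hg).hasFDerivWithinAt
    (sub_mem_posTangentConeAt_of_segment_subset (hC.segment_subset ha hy))

theorem norm_sub_le_norm_add_smul_sub {T : H → H} (hT : ∀ x y, 0 ≤ ⟪T x - T y, x - y⟫)
    {c : ℝ} (hc : 0 ≤ c) (x y : H) : ‖x - y‖ ≤ ‖x + c • T x - (y + c • T y)‖ := by
  have hsplit : x + c • T x - (y + c • T y) = (x - y) + c • (T x - T y) := by module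
  refine le_of_sq_le_sq ?_ (norm_nonneg _)
  rw [hsplit, norm_add_sq_real, inner_smul_right, real_inner_comm]
  nlinarith [hT x y, sq_nonneg ‖c • (T x - T y)‖]

theorem norm_sub_le_of_isNearest {C : Set H} (hC : Convex ℝ C) {x p z : H} (hp : p ∈ C)
    (hnear : ∀ y ∈ C, ‖x - p‖ ≤ ‖x - y‖) (hz : z ∈ C) : ‖p - z‖ ≤ ‖x - z‖ := by
  have : Nonempty C := ⟨⟨p, hp⟩⟩
  have hinf : ‖x - p‖ = ⨅ w : C, ‖x - w‖ :=
    le_antisymm (le_ciInf fun w => hnear w w.2)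
      (ciInf_le (f := fun w : C => ‖x - w‖) ⟨0, forall_mem_range.2 fun _ => norm_nonneg _⟩
        ⟨p, hp⟩)
  have hobtuse := (norm_eq_iInf_iff_real_inner_le_zero hC hp).1 hinf z hz
  have hsplit : x - z = (x - p) + (p - z) := by abel
  refine le_of_sq_le_sq ?_ (norm_nonneg _)
  rw [hsplit, norm_add_sq_real, ← neg_sub z p, inner_neg_right]
  nlinarith [sq_nonneg ‖x - p‖]

theorem eq_of_eq_sub_smul_of_monotone {T : H → H} (hT : ∀ x y, 0 ≤ ⟪T x - T y, x - y⟫)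
    {c : ℝ} (hc : 0 ≤ c) {u x y : H} (hx : x = u - c • T x) (hy : y = u - c • T y) : x = y := by
  have h := norm_sub_le_norm_add_smul_sub hT hc x y
  rw [eq_sub_iff_add_eq.1 hx, eq_sub_iff_add_eq.1 hy, sub_self, norm_zero] at h
  exact sub_eq_zero.1 (norm_le_zero_iff.1 h)

theorem norm_sub_le_of_eq_sub_smul_of_monotone {T : H → H}
    (hT : ∀ x y, 0 ≤ ⟪T x - T y, x - y⟫) {c : ℝ} (hc : 0 ≤ c) {u x : H}
    (hx : x = u - c • T x) (z : H) : ‖x - z‖ ≤ ‖u - z - c • T z‖ := by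
  simpa [eq_sub_iff_add_eq.1 hx, sub_add_eq_sub_sub] using norm_sub_le_norm_add_smul_sub hT hc x z

theorem HasGradientAt.fun_sum [CompleteSpace H] {ι : Type*} {s : Finset ι} {f : ι → H → ℝ}
    {g : ι → H} {x : H} (hf : ∀ i ∈ s, HasGradientAt (f i) (g i) x) :
    HasGradientAt (fun y => ∑ i ∈ s, f i y) (∑ i ∈ s, g i) x := by
  rw [hasGradientAt_iff_hasFDerivAt, map_sum]
  exact HasFDerivAt.fun_sum fun i hi => hasGradientAt_iff_hasFDerivAt.1 (hf i hi)

theorem HasGradientAt.const_mul [CompleteSpace H] {f : H → ℝ} {g x : H}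
    (hf : HasGradientAt f g x) (c : ℝ) : HasGradientAt (fun y => c * f y) (c • g) x := by
  rw [hasGradientAt_iff_hasFDerivAt, map_smul]
  exact (hasGradientAt_iff_hasFDerivAt.1 hf).const_mul c

theorem IsMinOn.inner_smul_sum_gradient_nonneg [CompleteSpace H] {ι : Type*} [Fintype ι]
    {f : ι → H → ℝ} {C : Set H} (hC : Convex ℝ C) {a : H} {c : ℝ}
    (hmin : IsMinOn (fun x => c * ∑ i, f i x) C a) (ha : a ∈ C)
    (hd : ∀ i, DifferentiableAt ℝ (f i) a) {y : H} (hy : y ∈ C) :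
    0 ≤ ⟪c • ∑ i, gradient (f i) a, y - a⟫ :=
  hmin.inner_nonneg_of_hasGradientAt hC ha
    ((HasGradientAt.fun_sum fun i _ => (hd i).hasGradientAt).const_mul c) hy

theorem sum_mul_norm_sub_smul_sq_le {ι : Type*} {s : Finset ι} {p : ι → ℝ}
    (hp1 : ∑ i ∈ s, p i = 1) (g : ι → H) {v : H}
    (hv : 0 ≤ ⟪∑ i ∈ s, p i • g i, v⟫) {c : ℝ} (hc : 0 ≤ c) :
    ∑ i ∈ s, p i * ‖v - c • g i‖ ^ 2 ≤ ‖v‖ ^ 2 + c ^ 2 * ∑ i ∈ s, p i * ‖g i‖ ^ 2 := by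
  have hexpand : ∑ i ∈ s, p i * ‖v - c • g i‖ ^ 2
      = (∑ i ∈ s, p i) * ‖v‖ ^ 2 - 2 * c * ⟪∑ i ∈ s, p i • g i, v⟫
        + c ^ 2 * ∑ i ∈ s, p i * ‖g i‖ ^ 2 := by
    simp only [sum_inner, inner_smul_left, conj_trivial, Finset.sum_mul, Finset.mul_sum,
      ← Finset.sum_sub_distrib, ← Finset.sum_add_distrib]
    refine Finset.sum_congr rfl fun i _ => ?_
    rw [norm_sub_sq_real, norm_smul, inner_smul_right, real_inner_comm, Real.norm_eq_abs,
      abs_of_nonneg hc]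
    ring
  rw [hexpand, hp1]
  nlinarith

end ConvexAnalysis

section Probability

variable {Ω : Type*} [MeasurableSpace Ω] {μ : Measure Ω}

theorem integrable_comp_of_finite [IsFiniteMeasure μ] {α E : Type*} [Finite α]
    [MeasurableSpace α] [MeasurableSingletonClass α] [NormedAddCommGroup E] {W : Ω → α}
    (hW : Measurable W) (h : α → E) : Integrable (fun ω => h (W ω)) μ :=
  Integrable.of_finite.comp_measurable hW

theorem integral_comp_eq_integral_sum_of_indepFun [IsFiniteMeasure μ] {ι α : Type*}
    [Fintype ι] [MeasurableSpace ι] [MeasurableSingletonClass ι] [Finite α] [MeasurableSpace α]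
    [MeasurableSingletonClass α] {X : Ω → ι} {W : Ω → α} (hX : Measurable X) (hW : Measurable W)
    (hXW : IndepFun X W μ) (h : ι → α → ℝ) :
    ∫ ω, h (X ω) (W ω) ∂μ = ∫ ω, ∑ i, μ.real (X ⁻¹' {i}) * h i (W ω) ∂μ := by
  have hsplit : ∀ ω, h (X ω) (W ω) = ∑ i, ({i} : Set ι).indicator 1 (X ω) * h i (W ω) := by
    intro ω
    classical
    simp [Set.indicator_apply]
  simp_rw [hsplit]
  rw [integral_finsetSum _ fun i _ => integrable_comp_of_finite (hX.prodMk hW)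
      (fun xw => ({i} : Set ι).indicator 1 xw.1 * h i xw.2),
    integral_finsetSum _ fun i _ => (integrable_comp_of_finite hW (h i)).const_mul _]
  refine Finset.sum_congr rfl fun i _ => ?_
  rw [hXW.integral_fun_comp_mul_comp hX.aemeasurable hW.aemeasurable
      (measurable_of_countable _).aestronglyMeasurable
      (measurable_of_countable _).aestronglyMeasurable, integral_const_mul]
  congr 1
  rw [← integral_indicator_one (hX (measurableSet_singleton i))]
  rfl

theorem Function.FactorsThrough.integrable [IsFiniteMeasure μ] {α E : Type*} [Finite α]
    [MeasurableSpace α] [MeasurableSingletonClass α] [NormedAddCommGroup E] {W : Ω → α}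
    (hW : Measurable W) {g : Ω → E} (hg : g.FactorsThrough W) : Integrable g μ :=
  (integrable_comp_of_finite hW (Function.extend W g 0)).congr
    (Eventually.of_forall fun ω => hg.extend_apply 0 ω)

end Probability

theorem le_add_sum_range_of_succ_le {a b : ℕ → ℝ} (h : ∀ k, a (k + 1) ≤ a k + b k) (k : ℕ) :
    a k ≤ a 0 + ∑ j ∈ Finset.range k, b j := by
  induction k with
  | zero => simp
  | succ k ih => rw [Finset.sum_range_succ]; linarith [h k]

theorem sum_range_inv_mul_rpow_sq_le {ρ₁ γ : ℝ} (hγ : 1 / 2 < γ) (k : ℕ) :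
    ∑ j ∈ Finset.range k, (ρ₁ * ((j + 1 : ℕ) : ℝ) ^ γ)⁻¹ ^ 2
      ≤ (∑' j : ℕ, ((j : ℝ) + 1) ^ (-(2 * γ))) / ρ₁ ^ 2 := by
  have hterm (j : ℕ) :
      (ρ₁ * ((j + 1 : ℕ) : ℝ) ^ γ)⁻¹ ^ 2 = ((j : ℝ) + 1) ^ (-(2 * γ)) / ρ₁ ^ 2 := by
    push_cast
    rw [Real.rpow_neg (by positivity), mul_comm 2 γ, Real.rpow_mul (by positivity),
      Real.rpow_two, mul_inv, mul_pow, inv_pow, inv_pow]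
    ring
  have hsummable : Summable fun j : ℕ => ((j : ℝ) + 1) ^ (-(2 * γ)) := by
    have := (summable_nat_add_iff 1).2 (Real.summable_nat_rpow.2 (by linarith : -(2 * γ) < -1))
    simpa using this
  simp_rw [hterm, ← Finset.sum_div]
  gcongr
  exact hsummable.sum_le_tsum _ fun j _ => by positivity

section History

variable {Ω : Type*} {ι : Type*}

-- `ξ 0` plays no role in the iteration; keeping it lets the history be indexed by `range (k + 1)`.
def history (ξ : ℕ → Ω → ι) (k : ℕ) (ω : Ω) : Finset.range (k + 1) → ι :=
  fun j => ξ j ω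

theorem measurable_history [MeasurableSpace Ω] [MeasurableSpace ι] {ξ : ℕ → Ω → ι}
    (hξ : ∀ j, Measurable (ξ j)) (k : ℕ) : Measurable (history ξ k) :=
  measurable_pi_lambda _ fun j => hξ j

theorem ProbabilityTheory.iIndepFun.indepFun_history [MeasurableSpace Ω] {μ : Measure Ω}
    [MeasurableSpace ι] {ξ : ℕ → Ω → ι} (hind : iIndepFun ξ μ) (hξ : ∀ j, Measurable (ξ j)) (k : ℕ) :
    IndepFun (ξ (k + 1)) (history ξ k) μ := by
  have h := hind.indepFun_finset {k + 1} (Finset.range (k + 1)) (by simp) hξ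
  exact h.comp (measurable_pi_apply ⟨k + 1, Finset.mem_singleton_self _⟩) measurable_id

end History

section ProximalIteration

variable {Ω H : Type*} [NormedAddCommGroup H] [InnerProductSpace ℝ H] [CompleteSpace H]
  {n : ℕ} {f : Fin n → H → ℝ} {ρ : ℕ → ℝ} {P : H → H} {ξ : ℕ → Ω → Fin n} {θ : ℕ → Ω → H}

theorem factorsThrough_history (hf : ∀ i, ConvexOn ℝ univ (f i))
    (hd : ∀ i, Differentiable ℝ (f i)) (hρ : ∀ k, 0 < ρ (k + 1)) {θ₀ : H}
    (hθ₀ : ∀ ω, θ 0 ω = θ₀)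
    (hstep : ∀ k ω,
      θ (k + 1) ω = P (θ k ω) - (ρ (k + 1))⁻¹ • gradient (f (ξ (k + 1) ω)) (θ (k + 1) ω)) :
    ∀ k, (θ k).FactorsThrough (history ξ k)
  | 0 => fun ω ω' _ => by rw [hθ₀, hθ₀]
  | k + 1 => fun ω ω' heq => by
    have hprev : θ k ω = θ k ω' := factorsThrough_history hf hd hρ hθ₀ hstep k <| by
      funext j
      exact congrFun heq ⟨j, Finset.mem_range.2 (by have := Finset.mem_range.1 j.2; omega)⟩
    have hidx : ξ (k + 1) ω = ξ (k + 1) ω' :=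
      congrFun heq ⟨k + 1, Finset.self_mem_range_succ _⟩
    have h := hstep k ω
    rw [hprev, hidx] at h
    exact eq_of_eq_sub_smul_of_monotone ((hf _).inner_gradient_sub_nonneg (hd _))
      (inv_nonneg.2 (hρ k).le) h (hstep k ω')

theorem integral_norm_proj_sub_sq_succ_le [MeasurableSpace Ω] {μ : Measure Ω}
    [IsProbabilityMeasure μ] {C : Set H} (hC : Convex ℝ C)
    (hP : ∀ x, P x ∈ C ∧ ∀ y ∈ C, ‖x - P x‖ ≤ ‖x - y‖) {z : H} (hz : z ∈ C)
    (hf : ∀ i, ConvexOn ℝ univ (f i)) (hd : ∀ i, Differentiable ℝ (f i)) {k : ℕ}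
    (hρ : 0 < ρ (k + 1))
    (hstep : ∀ ω,
      θ (k + 1) ω = P (θ k ω) - (ρ (k + 1))⁻¹ • gradient (f (ξ (k + 1) ω)) (θ (k + 1) ω))
    (hξ : ∀ j, Measurable (ξ j)) (hind : IndepFun (ξ (k + 1)) (history ξ k) μ)
    (hθ : (θ k).FactorsThrough (history ξ k))
    (hθ' : (θ (k + 1)).FactorsThrough (history ξ (k + 1)))
    (hz_opt : ∀ y ∈ C, 0 ≤ ⟪∑ i, μ.real (ξ (k + 1) ⁻¹' {i}) • gradient (f i) z, y - z⟫) :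
    ∫ ω, ‖P (θ (k + 1) ω) - z‖ ^ 2 ∂μ ≤ ∫ ω, ‖P (θ k ω) - z‖ ^ 2 ∂μ
      + (ρ (k + 1))⁻¹ ^ 2 * ∑ i, μ.real (ξ (k + 1) ⁻¹' {i}) * ‖gradient (f i) z‖ ^ 2 := by
  set c := (ρ (k + 1))⁻¹
  set p : Fin n → ℝ := fun i => μ.real (ξ (k + 1) ⁻¹' {i})
  set g : Fin n → H := fun i => gradient (f i) z
  set Φ := Function.extend (history ξ k) (θ k) 0
  have hΦ : ∀ ω, Φ (history ξ k ω) = θ k ω := hθ.extend_apply 0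
  have hW := measurable_history hξ k
  have hp : ∑ i, p i = 1 := by
    rw [sum_measureReal_preimage_singleton (μ := μ) _
      fun i _ => hξ (k + 1) (measurableSet_singleton i)]
    simp
  have hpoint (ω : Ω) :
      ‖P (θ (k + 1) ω) - z‖ ^ 2 ≤ ‖P (Φ (history ξ k ω)) - z - c • g (ξ (k + 1) ω)‖ ^ 2 := by
    rw [hΦ]
    gcongr
    exact (norm_sub_le_of_isNearest hC (hP _).1 (hP _).2 hz).trans
      (norm_sub_le_of_eq_sub_smul_of_monotone ((hf _).inner_gradient_sub_nonneg (hd _))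
        (inv_nonneg.2 hρ.le) (hstep ω) z)
  calc ∫ ω, ‖P (θ (k + 1) ω) - z‖ ^ 2 ∂μ
      ≤ ∫ ω, ‖P (Φ (history ξ k ω)) - z - c • g (ξ (k + 1) ω)‖ ^ 2 ∂μ :=
        integral_mono
          (Function.FactorsThrough.integrable (measurable_history hξ (k + 1))
            fun _ _ h => by rw [hθ' h])
          (integrable_comp_of_finite ((hξ _).prodMk hW)
            fun iw => ‖P (Φ iw.2) - z - c • g iw.1‖ ^ 2) hpoint
    _ = ∫ ω, ∑ i, p i * ‖P (Φ (history ξ k ω)) - z - c • g i‖ ^ 2 ∂μ :=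
        integral_comp_eq_integral_sum_of_indepFun (hξ _) hW hind
          fun i a => ‖P (Φ a) - z - c • g i‖ ^ 2
    _ ≤ ∫ ω, (‖P (Φ (history ξ k ω)) - z‖ ^ 2 + c ^ 2 * ∑ i, p i * ‖g i‖ ^ 2) ∂μ :=
        integral_mono
          (integrable_comp_of_finite hW fun a => ∑ i, p i * ‖P (Φ a) - z - c • g i‖ ^ 2)
          (integrable_comp_of_finite hW
            fun a => ‖P (Φ a) - z‖ ^ 2 + c ^ 2 * ∑ i, p i * ‖g i‖ ^ 2)
          fun ω => sum_mul_norm_sub_smul_sq_le hp g (hz_opt _ (hP _).1) (inv_nonneg.2 hρ.le)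
    _ = ∫ ω, ‖P (θ k ω) - z‖ ^ 2 ∂μ + c ^ 2 * ∑ i, p i * ‖g i‖ ^ 2 := by
        rw [integral_add (integrable_comp_of_finite hW fun a => ‖P (Φ a) - z‖ ^ 2)
          (integrable_const _), integral_const]
        simp [hΦ]

end ProximalIteration

theorem stmt_7_general {p n : ℕ}
    (f : Fin n → EuclideanSpace ℝ (Fin p) → ℝ)
    (hfconv : ∀ i, ConvexOn ℝ Set.univ (f i))
    (hfdiff : ∀ i, Differentiable ℝ (f i))
    (L : ℝ)
    (F : EuclideanSpace ℝ (Fin p) → ℝ)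
    (hF : ∀ θ', F θ' = (1 / n : ℝ) * ∑ i, f i θ')
    (C : Set (EuclideanSpace ℝ (Fin p)))
    (hCconv : Convex ℝ C)
    (P : EuclideanSpace ℝ (Fin p) → EuclideanSpace ℝ (Fin p))
    (hP : ∀ x, P x ∈ C ∧ ∀ y ∈ C, ‖x - P x‖ ≤ ‖x - y‖)
    (θstar : EuclideanSpace ℝ (Fin p))
    (hθstar : θstar ∈ C ∧ ∀ θ' ∈ C, F θstar ≤ F θ')
    (ρ₁ γ : ℝ) (hρ₁ : 0 < ρ₁) (hγ : 1 / 2 < γ ∧ γ ≤ 1)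
    (ρ : ℕ → ℝ) (hρ : ∀ k : ℕ, ρ k = ρ₁ * (k : ℝ) ^ γ)
    {Ω : Type*} [MeasurableSpace Ω] (Pr : Measure Ω) [IsProbabilityMeasure Pr]
    (ξ : ℕ → Ω → Fin n) (hξmeas : ∀ k, Measurable (ξ k))
    (hξindep : ProbabilityTheory.iIndepFun ξ Pr)
    (hξunif : ∀ k, 1 ≤ k → ∀ i : Fin n, Pr {ω | ξ k ω = i} = (n : ENNReal)⁻¹)
    (θ₀ : EuclideanSpace ℝ (Fin p))
    (θ : ℕ → Ω → EuclideanSpace ℝ (Fin p))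
    (hθ0 : ∀ ω, θ 0 ω = θ₀)
    (hupdate : ∀ k, 1 ≤ k → ∀ ω,
      θ k ω = P (θ (k - 1) ω) - (ρ k)⁻¹ • gradient (f (ξ k ω)) (θ k ω))
    (G s r : ℝ)
    (hG : G ^ 2 = (1 / n : ℝ) * ∑ i, ‖gradient (f i) θstar‖ ^ 2)
    (hs : s = ∑' k : ℕ, ((k : ℝ) + 1) ^ (-(2 * γ)))
    (hr : r ^ 2 = Real.exp (4 * L ^ 2 * s / ρ₁ ^ 2) *
      (4 * G ^ 2 * s / ρ₁ ^ 2 + ‖P θ₀ - θstar‖ ^ 2)) :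
    ∀ k : ℕ, (∫ ω, ‖P (θ k ω) - θstar‖ ^ 2 ∂Pr) ≤ r ^ 2 := by
  have hρpos (k : ℕ) : 0 < ρ (k + 1) := by rw [hρ]; positivity
  have hstep (k : ℕ) (ω : Ω) :
      θ (k + 1) ω = P (θ k ω) - (ρ (k + 1))⁻¹ • gradient (f (ξ (k + 1) ω)) (θ (k + 1) ω) := by
    simpa using hupdate (k + 1) (by omega) ω
  have hunif (k : ℕ) (i : Fin n) : Pr.real (ξ (k + 1) ⁻¹' {i}) = 1 / n := by
    change (Pr {ω | ξ (k + 1) ω = i}).toReal = _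
    rw [hξunif _ (by omega), ENNReal.toReal_inv, ENNReal.toReal_natCast, one_div]
  have hmin : IsMinOn (fun x => (1 / n : ℝ) * ∑ i, f i x) C θstar :=
    funext hF ▸ isMinOn_iff.2 hθstar.2
  have hone (k : ℕ) : ∫ ω, ‖P (θ (k + 1) ω) - θstar‖ ^ 2 ∂Pr
      ≤ ∫ ω, ‖P (θ k ω) - θstar‖ ^ 2 ∂Pr + G ^ 2 * (ρ (k + 1))⁻¹ ^ 2 := by
    have := integral_norm_proj_sub_sq_succ_le (μ := Pr) hCconv hP hθstar.1 hfconv hfdiff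
      (hρpos k) (hstep k) hξmeas (hξindep.indepFun_history hξmeas k)
      (factorsThrough_history hfconv hfdiff hρpos hθ0 hstep k)
      (factorsThrough_history hfconv hfdiff hρpos hθ0 hstep (k + 1))
      (by simpa only [hunif, ← Finset.smul_sum] using
        fun y => hmin.inner_smul_sum_gradient_nonneg hCconv hθstar.1 fun i => hfdiff i θstar)
    simp only [hunif, ← Finset.mul_sum, ← hG] at this
    linarith
  have hs0 : 0 ≤ s := hs ▸ tsum_nonneg fun j => by positivity
  intro k
  calc ∫ ω, ‖P (θ k ω) - θstar‖ ^ 2 ∂Pr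
      ≤ ‖P θ₀ - θstar‖ ^ 2 + ∑ j ∈ Finset.range k, G ^ 2 * (ρ (j + 1))⁻¹ ^ 2 := by
        simpa [hθ0] using
          le_add_sum_range_of_succ_le (a := fun k => ∫ ω, ‖P (θ k ω) - θstar‖ ^ 2 ∂Pr) hone k
    _ ≤ ‖P θ₀ - θstar‖ ^ 2 + G ^ 2 * (s / ρ₁ ^ 2) := by
        rw [← Finset.mul_sum]
        gcongr
        simpa only [hρ, hs] using sum_range_inv_mul_rpow_sq_le (ρ₁ := ρ₁) hγ.1 k
    _ ≤ r ^ 2 := by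
        have hexp : 1 ≤ Real.exp (4 * L ^ 2 * s / ρ₁ ^ 2) := Real.one_le_exp (by positivity)
        have hX : 0 ≤ G ^ 2 * (s / ρ₁ ^ 2) := by positivity
        rw [hr, show 4 * G ^ 2 * s / ρ₁ ^ 2 = 4 * (G ^ 2 * (s / ρ₁ ^ 2)) by ring]
        calc _ ≤ 1 * (4 * (G ^ 2 * (s / ρ₁ ^ 2)) + ‖P θ₀ - θstar‖ ^ 2) := by linarith
          _ ≤ _ := by gcongr

set_option maxHeartbeats 1000000 in
/-- Proposition 2(a): the projected iterates of the stochastic proximal distance algorithm satisfy E‖P_C(θ_k) − θ*‖² ≤ r². -/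
theorem stmt_7 {p n : ℕ} (hn : 1 ≤ n)
    (f : Fin n → EuclideanSpace ℝ (Fin p) → ℝ)
    (hfconv : ∀ i, ConvexOn ℝ Set.univ (f i))
    (hfdiff : ∀ i, Differentiable ℝ (f i))
    (L : ℝ) (hL : 0 < L)
    (hLip : ∀ i x y, ‖gradient (f i) x - gradient (f i) y‖ ≤ L * ‖x - y‖)
    (F : EuclideanSpace ℝ (Fin p) → ℝ)
    (hF : ∀ θ', F θ' = (1 / n : ℝ) * ∑ i, f i θ')
    (hFcont : Continuous F) (hFstrict : StrictConvexOn ℝ Set.univ F)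
    (hFcoercive : Tendsto F (comap norm atTop) atTop)
    (C : Set (EuclideanSpace ℝ (Fin p)))
    (hCne : C.Nonempty) (hCclosed : IsClosed C) (hCconv : Convex ℝ C)
    (P : EuclideanSpace ℝ (Fin p) → EuclideanSpace ℝ (Fin p))
    (hP : ∀ x, P x ∈ C ∧ ∀ y ∈ C, ‖x - P x‖ ≤ ‖x - y‖)
    (θstar : EuclideanSpace ℝ (Fin p))
    (hθstar : θstar ∈ C ∧ ∀ θ' ∈ C, F θstar ≤ F θ')
    (ρ₁ γ : ℝ) (hρ₁ : 0 < ρ₁) (hγ : 1 / 2 < γ ∧ γ ≤ 1)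
    (ρ : ℕ → ℝ) (hρ : ∀ k : ℕ, ρ k = ρ₁ * (k : ℝ) ^ γ)
    {Ω : Type*} [MeasurableSpace Ω] (Pr : Measure Ω) [IsProbabilityMeasure Pr]
    (ξ : ℕ → Ω → Fin n) (hξmeas : ∀ k, Measurable (ξ k))
    (hξindep : ProbabilityTheory.iIndepFun ξ Pr)
    (hξunif : ∀ k, 1 ≤ k → ∀ i : Fin n, Pr {ω | ξ k ω = i} = (n : ENNReal)⁻¹)
    (θ₀ : EuclideanSpace ℝ (Fin p))
    (θ : ℕ → Ω → EuclideanSpace ℝ (Fin p))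
    (hθ0 : ∀ ω, θ 0 ω = θ₀) (hθmeas : ∀ k, Measurable (θ k))
    (hupdate : ∀ k, 1 ≤ k → ∀ ω,
      θ k ω = P (θ (k - 1) ω) - (ρ k)⁻¹ • gradient (f (ξ k ω)) (θ k ω))
    (G s r : ℝ) (hGnn : 0 ≤ G) (hrnn : 0 ≤ r)
    (hG : G ^ 2 = (1 / n : ℝ) * ∑ i, ‖gradient (f i) θstar‖ ^ 2)
    (hs : s = ∑' k : ℕ, ((k : ℝ) + 1) ^ (-(2 * γ)))
    (hr : r ^ 2 = Real.exp (4 * L ^ 2 * s / ρ₁ ^ 2) *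
      (4 * G ^ 2 * s / ρ₁ ^ 2 + ‖P θ₀ - θstar‖ ^ 2)) :
    ∀ k : ℕ, (∫ ω, ‖P (θ k ω) - θstar‖ ^ 2 ∂Pr) ≤ r ^ 2 :=
  stmt_7_general f hfconv hfdiff L F hF C hCconv P hP θstar hθstar ρ₁ γ hρ₁ hγ ρ hρ Pr ξ hξmeas
    hξindep hξunif θ₀ θ hθ0 hupdate G s r hG hs hr
end

section
/- Let (Ω, ℱ, ℙ) be a probability space with an increasing sequence of sub-σ-fields ℱ_k ⊆ ℱ_{k+1} (k = 0, 1, …), and let Y_k, Z_k, W_k (k = 0, 1, …) be sequences of nonnegative integrable random variables such that Y_k, Z_k, W_k are ℱ_k-measurable for each k, E[Y_{k+1} | ℱ_k] ≤ Y_k − Z_k + W_k for each k, and Σ_{k=0}^∞ W_k < ∞ with probability 1. Then Σ_{k=0}^∞ Z_k < ∞ with probability 1, and the sequence Y_k converges with probability 1 to a nonnegative random variable Y. -/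
/-!
The process `M k = Y k + ∑_{i<k} (Z i - W i)` is a supermartingale, but it is only bounded below
by `-∑_{i<k} W i`. Stopping it at the first time `τ` the partial sums `∑_{i≤k} W i` exceed a level
`a` keeps it above `-a`, because `M k` only sees `W i` for `i < k`; the stopped process then converges
almost surely, and it equals `M` wherever all partial sums of `W` stay below `a`. Letting `a` run
through `ℕ`, `M` converges a.s. wherever `∑ W < ∞`, so `Y k + ∑_{i<k} Z i` converges there; being
bounded, its monotone part `∑_{i<k} Z i` converges, and hence so does `Y k`.
-/

open MeasureTheory Filter Topology Finset

namespace MeasureTheory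

variable {Ω : Type*} {mΩ : MeasurableSpace Ω} {μ : Measure Ω} {ℱ : Filtration ℕ mΩ}

protected theorem Supermartingale.stoppedProcess [IsFiniteMeasure μ] {f : ℕ → Ω → ℝ}
    (hf : Supermartingale f ℱ μ) {τ : Ω → ℕ∞} (hτ : IsStoppingTime ℱ τ) :
    Supermartingale (stoppedProcess f τ) ℱ μ := by
  have h := (hf.neg.stoppedProcess hτ).neg
  rwa [show stoppedProcess (-f) τ = -(stoppedProcess f τ) from rfl, neg_neg] at h

theorem Supermartingale.exists_ae_tendsto_of_const_le [IsFiniteMeasure μ] {f : ℕ → Ω → ℝ}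
    (hf : Supermartingale f ℱ μ) {c : ℝ} (hc : ∀ n, ∀ᵐ ω ∂μ, c ≤ f n ω) :
    ∀ᵐ ω ∂μ, ∃ l, Tendsto (fun n => f n ω) atTop (𝓝 l) := by
  set g : ℕ → Ω → ℝ := fun n ω => f n ω - c
  have hg : Supermartingale g ℱ μ := hf.sub_martingale (martingale_const ℱ μ c)
  have hbdd : ∀ n, eLpNorm ((-g) n) 1 μ ≤ (∫ ω, g 0 ω ∂μ).toNNReal := by
    intro n
    rw [Pi.neg_apply, eLpNorm_neg, eLpNorm_one_eq_lintegral_enorm,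
      ← ofReal_integral_norm_eq_lintegral_enorm (hg.integrable n)]
    refine ENNReal.ofReal_le_ofReal ?_
    calc ∫ ω, ‖g n ω‖ ∂μ = ∫ ω, g n ω ∂μ := integral_congr_ae <| by
          filter_upwards [hc n] with ω hω using Real.norm_of_nonneg (sub_nonneg.2 hω)
      _ ≤ ∫ ω, g 0 ω ∂μ := by simpa using hg.setIntegral_le (Nat.zero_le n) MeasurableSet.univ
  filter_upwards [hg.neg.exists_ae_tendsto_of_bdd hbdd] with ω ⟨l, hl⟩
  exact ⟨-l + c, by simpa [g] using hl.neg.add_const c⟩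

theorem exists_stoppedProcess_eq {β : Type*} (u : ℕ → Ω → β)
    (τ : Ω → ℕ∞) (n : ℕ) (ω : Ω) :
    ∃ j : ℕ, (j : ℕ∞) ≤ τ ω ∧ stoppedProcess u τ n ω = u j ω := by
  rcases le_total (n : ℕ∞) (τ ω) with h | h
  · exact ⟨n, h, stoppedProcess_eq_of_le h⟩
  · obtain ⟨m, hm⟩ := ENat.ne_top_iff_exists.1 (ne_top_of_le_ne_top (ENat.natCast_ne_top n) h)
    refine ⟨m, hm.le, ?_⟩
    rw [stoppedProcess_eq_of_ge h, ← hm]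
    rfl

theorem exists_measurable_nonneg_limit {f : ℕ → Ω → ℝ} (hf : ∀ n, Measurable (f n))
    (hnn : ∀ n ω, 0 ≤ f n ω) (hlim : ∀ᵐ ω ∂μ, ∃ l, Tendsto (fun n => f n ω) atTop (𝓝 l)) :
    ∃ g : Ω → ℝ, Measurable g ∧ (∀ ω, 0 ≤ g ω) ∧
      ∀ᵐ ω ∂μ, Tendsto (fun n => f n ω) atTop (𝓝 (g ω)) := by
  obtain ⟨g, hg, hfg⟩ :=
    measurable_limit_of_tendsto_metrizable_ae (fun n => (hf n).aemeasurable) hlim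
  refine ⟨fun ω => max (g ω) 0, hg.max measurable_const, fun ω => le_max_right _ _, ?_⟩
  filter_upwards [hfg] with ω hω
  rwa [max_eq_left (ge_of_tendsto' hω (hnn · ω))]

theorem summable_and_tendsto_of_tendsto_add_sum_sub {y z w : ℕ → ℝ} (hy : ∀ k, 0 ≤ y k)
    (hz : ∀ k, 0 ≤ z k) (hw : Summable w) {l : ℝ}
    (h : Tendsto (fun k => y k + ∑ i ∈ range k, (z i - w i)) atTop (𝓝 l)) :
    Summable z ∧ Tendsto y atTop (𝓝 (l + ∑' i, w i - ∑' i, z i)) := by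
  have hyz : Tendsto (fun k => y k + ∑ i ∈ range k, z i) atTop (𝓝 (l + ∑' i, w i)) := by
    refine (h.add hw.hasSum.tendsto_sum_nat).congr fun k => ?_
    rw [sum_sub_distrib]
    ring
  obtain ⟨C, hC⟩ := hyz.bddAbove_range
  have hz_summable : Summable z := summable_of_sum_range_le hz fun k =>
    (le_add_of_nonneg_left (hy k)).trans (hC ⟨k, rfl⟩)
  refine ⟨hz_summable, (hyz.sub hz_summable.hasSum.tendsto_sum_nat).congr fun k => ?_⟩
  ring

end MeasureTheory

def robbinsSiegmundProcess {Ω : Type*} (Y Z W : ℕ → Ω → ℝ) (k : ℕ) (ω : Ω) : ℝ :=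
  Y k ω + ∑ i ∈ range k, (Z i ω - W i ω)

section RobbinsSiegmund

variable {Ω : Type*} {mΩ : MeasurableSpace Ω} {μ : Measure Ω} {ℱ : Filtration ℕ mΩ}
  {Y Z W : ℕ → Ω → ℝ}

theorem supermartingale_robbinsSiegmundProcess [IsFiniteMeasure μ]
    (hY : StronglyAdapted ℱ Y) (hZ : StronglyAdapted ℱ Z) (hW : StronglyAdapted ℱ W)
    (hYint : ∀ k, Integrable (Y k) μ) (hZint : ∀ k, Integrable (Z k) μ)
    (hWint : ∀ k, Integrable (W k) μ)
    (hcond : ∀ k, ∀ᵐ ω ∂μ, (μ[Y (k + 1)|ℱ k]) ω ≤ Y k ω - Z k ω + W k ω) :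
    Supermartingale (robbinsSiegmundProcess Y Z W) ℱ μ := by
  set S : ℕ → Ω → ℝ := fun k ω => ∑ i ∈ range k, (Z i ω - W i ω)
  have hS_meas (k j : ℕ) (hkj : k ≤ j + 1) : StronglyMeasurable[ℱ j] (S k) :=
    Finset.stronglyMeasurable_fun_sum _ fun i hi =>
      ((hZ i).sub (hW i)).mono (ℱ.mono (by rw [mem_range] at hi; omega))
  have hS_int (k : ℕ) : Integrable (S k) μ :=
    integrable_finsetSum _ fun i _ => (hZint i).sub (hWint i)
  refine supermartingale_nat (fun k => (hY k).add (hS_meas k k k.le_succ))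
    (fun k => (hYint k).add (hS_int k)) fun k => ?_
  have hsplit : μ[Y (k + 1) + S (k + 1)|ℱ k] =ᵐ[μ] μ[Y (k + 1)|ℱ k] + S (k + 1) := by
    filter_upwards [condExp_add (hYint (k + 1)) (hS_int (k + 1)) (ℱ k)] with ω hω
    rw [hω, Pi.add_apply, Pi.add_apply,
      condExp_of_stronglyMeasurable (ℱ.le k) (hS_meas (k + 1) k le_rfl) (hS_int (k + 1))]
  filter_upwards [hsplit, hcond k] with ω hω hYω
  change (μ[Y (k + 1) + S (k + 1)|ℱ k]) ω ≤ Y k ω + S k ω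
  rw [hω, Pi.add_apply]
  simp only [S, sum_range_succ]
  linarith

theorem neg_sum_le_robbinsSiegmundProcess (hYnn : ∀ k ω, 0 ≤ Y k ω) (hZnn : ∀ k ω, 0 ≤ Z k ω)
    (k : ℕ) (ω : Ω) : -∑ i ∈ range k, W i ω ≤ robbinsSiegmundProcess Y Z W k ω := by
  have := sum_nonneg fun i (_ : i ∈ range k) => hZnn i ω
  rw [robbinsSiegmundProcess, sum_sub_distrib]
  linarith [hYnn k ω]

theorem sum_range_le_of_le_hittingAfter {a : ℝ} (ha : 0 ≤ a) {ω : Ω} {j : ℕ}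
    (hj : (j : ℕ∞) ≤ hittingAfter (fun k ω => ∑ i ∈ range (k + 1), W i ω) (Set.Ioi a) 0 ω) :
    ∑ i ∈ range j, W i ω ≤ a := by
  cases j with
  | zero => simpa using ha
  | succ j =>
    simpa using notMem_of_lt_hittingAfter (lt_of_lt_of_le (Nat.cast_lt.2 j.lt_succ_self) hj)
      (Nat.zero_le j)

theorem ae_exists_tendsto_robbinsSiegmundProcess_of_sum_le [IsFiniteMeasure μ]
    (hM : Supermartingale (robbinsSiegmundProcess Y Z W) ℱ μ) (hYnn : ∀ k ω, 0 ≤ Y k ω)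
    (hZnn : ∀ k ω, 0 ≤ Z k ω) (hW : StronglyAdapted ℱ W) {a : ℝ} (ha : 0 ≤ a) :
    ∀ᵐ ω ∂μ, (∀ k, ∑ i ∈ range (k + 1), W i ω ≤ a) →
      ∃ l, Tendsto (fun k => robbinsSiegmundProcess Y Z W k ω) atTop (𝓝 l) := by
  set τ := hittingAfter (fun k ω => ∑ i ∈ range (k + 1), W i ω) (Set.Ioi a) 0
  have hτ : IsStoppingTime ℱ τ :=
    StronglyAdapted.adapted (fun k => Finset.stronglyMeasurable_fun_sum _ fun i hi =>
      (hW i).mono (ℱ.mono (Nat.lt_succ_iff.1 (mem_range.1 hi))))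
      |>.isStoppingTime_hittingAfter measurableSet_Ioi
  have hbdd (n : ℕ) (ω : Ω) : -a ≤ stoppedProcess (robbinsSiegmundProcess Y Z W) τ n ω := by
    obtain ⟨j, hj, hjeq⟩ := exists_stoppedProcess_eq (robbinsSiegmundProcess Y Z W) τ n ω
    rw [hjeq]
    exact (neg_le_neg (sum_range_le_of_le_hittingAfter ha hj)).trans
      (neg_sum_le_robbinsSiegmundProcess hYnn hZnn j ω)
  filter_upwards [(hM.stoppedProcess hτ).exists_ae_tendsto_of_const_le
    fun n => ae_of_all μ (hbdd n)] with ω ⟨l, hl⟩ hsum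
  have hτω : τ ω = ⊤ := hittingAfter_eq_top_iff.2 fun k _ => not_lt.2 (hsum k)
  exact ⟨l, hl.congr fun k => stoppedProcess_eq_of_le (hτω ▸ le_top)⟩

theorem ae_exists_tendsto_robbinsSiegmundProcess [IsFiniteMeasure μ]
    (hM : Supermartingale (robbinsSiegmundProcess Y Z W) ℱ μ) (hYnn : ∀ k ω, 0 ≤ Y k ω)
    (hZnn : ∀ k ω, 0 ≤ Z k ω) (hWnn : ∀ k ω, 0 ≤ W k ω) (hW : StronglyAdapted ℱ W) :
    ∀ᵐ ω ∂μ, Summable (fun k => W k ω) →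
      ∃ l, Tendsto (fun k => robbinsSiegmundProcess Y Z W k ω) atTop (𝓝 l) := by
  have h := ae_all_iff.2 fun a : ℕ =>
    ae_exists_tendsto_robbinsSiegmundProcess_of_sum_le hM hYnn hZnn hW a.cast_nonneg
  filter_upwards [h] with ω hω hsum
  obtain ⟨a, ha⟩ := exists_nat_ge (∑' k, W k ω)
  exact hω a fun k => (hsum.sum_le_tsum _ fun i _ => hWnn i ω).trans ha

end RobbinsSiegmund

/-- Supermartingale (Robbins–Siegmund) convergence theorem: if
E[Y_{k+1} | ℱ_k] ≤ Y_k − Z_k + W_k with Y, Z, W nonnegative, integrable,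
adapted, and Σ W_k < ∞ a.s., then Σ Z_k < ∞ a.s. and Y_k converges a.s.
to a nonnegative random variable. -/
theorem stmt_12 {Ω : Type*} {mΩ : MeasurableSpace Ω}
    (μ : Measure Ω) [IsProbabilityMeasure μ]
    (ℱ : Filtration ℕ mΩ) (Y Z W : ℕ → Ω → ℝ)
    (hYnn : ∀ k ω, 0 ≤ Y k ω) (hZnn : ∀ k ω, 0 ≤ Z k ω) (hWnn : ∀ k ω, 0 ≤ W k ω)
    (hYint : ∀ k, Integrable (Y k) μ) (hZint : ∀ k, Integrable (Z k) μ)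
    (hWint : ∀ k, Integrable (W k) μ)
    (hYmeas : ∀ k, StronglyMeasurable[ℱ k] (Y k))
    (hZmeas : ∀ k, StronglyMeasurable[ℱ k] (Z k))
    (hWmeas : ∀ k, StronglyMeasurable[ℱ k] (W k))
    (hcond : ∀ k, ∀ᵐ ω ∂μ, (μ[Y (k + 1)|ℱ k]) ω ≤ Y k ω - Z k ω + W k ω)
    (hWsum : ∀ᵐ ω ∂μ, Summable (fun k => W k ω)) :
    (∀ᵐ ω ∂μ, Summable (fun k => Z k ω)) ∧
      ∃ Ylim : Ω → ℝ, Measurable Ylim ∧ (∀ ω, 0 ≤ Ylim ω) ∧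
        ∀ᵐ ω ∂μ, Tendsto (fun k => Y k ω) atTop (nhds (Ylim ω)) := by
  have hM := supermartingale_robbinsSiegmundProcess hYmeas hZmeas hWmeas hYint hZint hWint hcond
  have hconv : ∀ᵐ ω ∂μ, Summable (fun k => Z k ω) ∧
      ∃ l, Tendsto (fun k => Y k ω) atTop (𝓝 l) := by
    filter_upwards [ae_exists_tendsto_robbinsSiegmundProcess hM hYnn hZnn hWnn hWmeas, hWsum]
      with ω hω hWω
    obtain ⟨l, hl⟩ := hω hWω
    obtain ⟨hZω, hYω⟩ := summable_and_tendsto_of_tendsto_add_sum_sub (hYnn · ω) (hZnn · ω) hWω hl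
    exact ⟨hZω, _, hYω⟩
  obtain ⟨Ylim, hmeas, hnn, hlim⟩ := exists_measurable_nonneg_limit
    (fun k => ((hYmeas k).mono (ℱ.le k)).measurable) hYnn (hconv.mono fun _ h => h.2)
  exact ⟨hconv.mono fun _ h => h.1, Ylim, hmeas, hnn, hlim⟩
end
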